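/- arXiv:0904.0890 — 3 statements merged into one kernel-verified Lean document; each statement's English description precedes it below -/
import Mathlib

section
/- Let δ : Sym^{a-1}(ℂ³) ⊗ Sym^{b-1}((ℂ³)^∨) → Sym^a(ℂ³) ⊗ Sym^b((ℂ³)^∨) be multiplication by Σᵢ eᵢ ⊗ xᵢ, and Δ the contraction operator. For integers a,b ≥ i ≥ 0, vectors u,q ∈ ℂ³ and linear forms v,p ∈ (ℂ³)^∨, evaluating the element δ^i(Δ^i(u^a ⊗ v^b)) at the point (p,q) (i.e. evaluating the first factor at p and the second at q) gives (a!/(a-i)!)·(b!/(b-i)!)·(δ(p,q))^i·v(u)^i·u(p)^{a-i}·v(q)^{b-i}, where δ(p,q) = Σᵢ pᵢqᵢ is the natural pairing of p and q. -/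
/-!
Since `∂/∂xⱼ` kills `linU u` and `∂/∂eⱼ` kills `linV v`, the Leibniz rule gives
`Δ (u^m v^n) = m n v(u) u^(m-1) v^(n-1)`. Iterating produces the descending factorials,
which vanish once `i` exceeds `a` or `b`, so the truncated subtractions `a - i`, `b - i` are
harmless; evaluation is then a ring homomorphism.
-/

open MvPolynomial
/-- The contraction operator Δ = Σᵢ ∂/∂eᵢ ⊗ ∂/∂xᵢ on bihomogeneous polynomials,
where the `Sum.inl` variables are the eᵢ's and the `Sum.inr` variables are the xᵢ's. -/
noncomputable def Delta (P : MvPolynomial (Fin 3 ⊕ Fin 3) ℂ) : MvPolynomial (Fin 3 ⊕ Fin 3) ℂ :=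
  ∑ i : Fin 3, pderiv (Sum.inl i) (pderiv (Sum.inr i) P)

/-- The linear form corresponding to u ∈ ℂ³, in the first set of variables. -/
noncomputable def linU (u : Fin 3 → ℂ) : MvPolynomial (Fin 3 ⊕ Fin 3) ℂ :=
  ∑ i : Fin 3, C (u i) * X (Sum.inl i)

/-- The linear form corresponding to v ∈ (ℂ³)^∨, in the second set of variables. -/
noncomputable def linV (v : Fin 3 → ℂ) : MvPolynomial (Fin 3 ⊕ Fin 3) ℂ :=
  ∑ i : Fin 3, C (v i) * X (Sum.inr i)


/-- The element Σᵢ eᵢ ⊗ xᵢ; multiplication by it is the raising operator δ. -/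
noncomputable def deltaElem : MvPolynomial (Fin 3 ⊕ Fin 3) ℂ :=
  ∑ i : Fin 3, X (Sum.inl i) * X (Sum.inr i)

lemma pderiv_inl_linU (u : Fin 3 → ℂ) (j : Fin 3) :
    pderiv (Sum.inl j) (linU u) = C (u j) := by
  simp [linU, pderiv_X, Pi.single_apply, eq_comm]

lemma pderiv_inr_linU (u : Fin 3 → ℂ) (j : Fin 3) :
    pderiv (Sum.inr j) (linU u) = 0 := by
  simp [linU, pderiv_X]

lemma pderiv_inr_linV (v : Fin 3 → ℂ) (j : Fin 3) :
    pderiv (Sum.inr j) (linV v) = C (v j) := by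
  simp [linV, pderiv_X, Pi.single_apply, eq_comm]

lemma pderiv_inl_linV (v : Fin 3 → ℂ) (j : Fin 3) :
    pderiv (Sum.inl j) (linV v) = 0 := by
  simp [linV, pderiv_X]

lemma Delta_C_mul (c : ℂ) (P : MvPolynomial (Fin 3 ⊕ Fin 3) ℂ) :
    Delta (C c * P) = C c * Delta P := by
  simp [Delta, Finset.mul_sum]

lemma Delta_linU_pow_mul_linV_pow (u v : Fin 3 → ℂ) (m n : ℕ) :
    Delta (linU u ^ m * linV v ^ n) =
      C ((m : ℂ) * n * ∑ j, v j * u j) * (linU u ^ (m - 1) * linV v ^ (n - 1)) := by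
  have summand : ∀ j : Fin 3,
      pderiv (Sum.inl j) (pderiv (Sum.inr j) (linU u ^ m * linV v ^ n)) =
        C ((m : ℂ) * n * (v j * u j)) * (linU u ^ (m - 1) * linV v ^ (n - 1)) := by
    intro j
    simp only [Derivation.leibniz, smul_eq_mul, pderiv_pow, pderiv_inr_linU, pderiv_inr_linV,
      pderiv_inl_linV, pderiv_inl_linU, pderiv_C, ← C_eq_coe_nat, mul_zero, add_zero, zero_add,
      map_mul]
    ring_nf
  simp only [Delta, summand, ← Finset.sum_mul, ← map_sum, ← Finset.mul_sum]

lemma Delta_iterate_linU_pow_mul_linV_pow (u v : Fin 3 → ℂ) (a b i : ℕ) :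
    Delta^[i] (linU u ^ a * linV v ^ b) =
      C ((a.descFactorial i : ℂ) * b.descFactorial i * (∑ j, v j * u j) ^ i) *
        (linU u ^ (a - i) * linV v ^ (b - i)) := by
  induction i with
  | zero => simp
  | succ i ih =>
    rw [Function.iterate_succ_apply', ih, Delta_C_mul, Delta_linU_pow_mul_linV_pow,
      Nat.sub_sub, Nat.sub_sub, Nat.descFactorial_succ, Nat.descFactorial_succ]
    simp only [← mul_assoc, ← map_mul, pow_succ, Nat.cast_mul]
    ring_nf

theorem stmt3_general (a b i : ℕ)
    (u q : Fin 3 → ℂ) (v p : Fin 3 → ℂ) :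
    eval (Sum.elim p q) (deltaElem ^ i * Delta^[i] (linU u ^ a * linV v ^ b)) =
      (a.descFactorial i : ℂ) * (b.descFactorial i : ℂ) *
        (∑ j, p j * q j) ^ i * (∑ j, v j * u j) ^ i *
        (∑ j, u j * p j) ^ (a - i) * (∑ j, v j * q j) ^ (b - i) := by
  rw [Delta_iterate_linU_pow_mul_linV_pow]
  simp only [deltaElem, linU, linV, map_mul, map_pow, eval_C, map_sum, eval_X, Sum.elim_inl,
    Sum.elim_inr]
  ring

/-- Evaluating δ^i(Δ^i(u^a ⊗ v^b)) at (p,q) gives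
(a!/(a-i)!)·(b!/(b-i)!)·(δ(p,q))^i·v(u)^i·u(p)^{a-i}·v(q)^{b-i}. -/
theorem stmt3 (a b i : ℕ) (hia : i ≤ a) (hib : i ≤ b)
    (u q : Fin 3 → ℂ) (v p : Fin 3 → ℂ) :
    eval (Sum.elim p q) (deltaElem ^ i * Delta^[i] (linU u ^ a * linV v ^ b)) =
      (a.descFactorial i : ℂ) * (b.descFactorial i : ℂ) *
        (∑ j, p j * q j) ^ i * (∑ j, v j * u j) ^ i *
        (∑ j, u j * p j) ^ (a - i) * (∑ j, v j * q j) ^ (b - i) :=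
  stmt3_general a b i u q v p
end

section
/- Let b₁,…,b_K be pairwise distinct complex numbers and p_i^b(c) = Π_{j≠i}(c−b_j)/(b_i−b_j) the Lagrange interpolation polynomials. Let d > K be an integer, x = x₁, y = λx₂ + μx₃ with (λ,μ) ≠ (0,0), and set lᵢ = bᵢ·x + y. Then for every c ∈ ℂ with c ≠ bᵢ for all i, the polynomial f(c) = Σ_{i=1}^K p_i^b(c)·lᵢ^d − (c·x + y)^d is nonzero and divisible by x^K. -/
/-!
Binomially, `f = ∑ₖ (∑ᵢ pᵢ(c) bᵢᵏ - cᵏ) (d choose k) xᵏ y^(d-k)`. Lagrange interpolation at `K`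
nodes reproduces polynomials of degree `< K`, so the coefficients with `k < K` vanish and
`x ^ K ∣ f`. For `k = K` the interpolation error of `tᴷ` at `c` is `-∏ᵢ (c - bᵢ) ≠ 0`, and
specialising `x ↦ t`, `y ↦ 1` (possible as `y` is a nonzero linear form) shows `f ≠ 0`.
-/

open MvPolynomial

namespace Lagrange

open Finset Polynomial

variable {F ι : Type*} [Field F] [Fintype ι] [DecidableEq ι] {b : ι → F}

theorem eval_basis_univ (i : ι) (c : F) :
    (Lagrange.basis univ b i).eval c = ∏ j ∈ univ.erase i, (c - b j) / (b i - b j) := by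
  simp only [Lagrange.basis, basisDivisor, Polynomial.eval_prod, Polynomial.eval_mul,
    Polynomial.eval_C, Polynomial.eval_sub, Polynomial.eval_X, div_eq_inv_mul, mul_comm]

theorem sum_eval_basis_mul_eval (hb : Function.Injective b) (c : F) {g : F[X]}
    (hg : g.degree < Fintype.card ι) :
    ∑ i, (Lagrange.basis univ b i).eval c * g.eval (b i) = g.eval c := by
  conv_rhs => rw [eq_interpolate hb.injOn (s := univ) hg]
  simp only [interpolate_apply, Polynomial.eval_finsetSum, Polynomial.eval_mul, Polynomial.eval_C,
    mul_comm]

theorem sum_eval_basis_mul_pow_of_lt (hb : Function.Injective b) (c : F) {k : ℕ}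
    (hk : k < Fintype.card ι) :
    ∑ i, (Lagrange.basis univ b i).eval c * b i ^ k = c ^ k := by
  simpa using sum_eval_basis_mul_eval hb c (g := Polynomial.X ^ k) (by simpa using hk)

/-- The interpolant of `X ^ n` at `n` nodes misses it by the monic nodal polynomial. -/
theorem sum_eval_basis_mul_pow_card (hb : Function.Injective b) (c : F) :
    ∑ i, (Lagrange.basis univ b i).eval c * b i ^ Fintype.card ι
      = c ^ Fintype.card ι - ∏ i, (c - b i) := by
  have hdeg :
      (Polynomial.X ^ Fintype.card ι - nodal univ b).degree < (Fintype.card ι : WithBot ℕ) := by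
    have h := degree_sub_lt_right (p := Polynomial.X ^ Fintype.card ι) (q := nodal univ b)
      (by rw [Polynomial.degree_X_pow, degree_nodal, card_univ]) nodal_ne_zero
      (by simp [nodal_monic.leadingCoeff])
    rwa [degree_nodal] at h
  have h := sum_eval_basis_mul_eval hb c hdeg
  simp only [Polynomial.eval_sub, Polynomial.eval_pow, Polynomial.eval_X,
    eval_nodal_at_node (mem_univ _), sub_zero] at h
  rwa [eval_nodal] at h

end Lagrange

section BinaryForms

open Finset
open scoped Polynomial

variable {F A ι : Type*} [Field F] [CommRing A] [Algebra F A]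

theorem sum_smul_add_pow_sub_add_pow [Fintype ι] (w a : ι → F) (c : F) (x y : A) (d : ℕ) :
    ∑ i, w i • (a i • x + y) ^ d - (c • x + y) ^ d
      = ∑ k ∈ range (d + 1), (∑ i, w i * a i ^ k - c ^ k) • (x ^ k * y ^ (d - k) * d.choose k) := by
  simp only [add_pow, _root_.smul_pow, smul_sum, sub_smul, sum_smul, sum_sub_distrib]
  rw [sum_comm]
  simp only [smul_mul_assoc, mul_smul]

theorem pow_dvd_sum_smul {x : A} {t : ℕ → A} (ht : ∀ k, x ^ k ∣ t k) {e : ℕ → F} {K : ℕ}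
    (he : ∀ k < K, e k = 0) (s : Finset ℕ) : x ^ K ∣ ∑ k ∈ s, e k • t k := by
  refine dvd_sum fun k _ => ?_
  rcases lt_or_ge k K with hk | hk
  · simp [he k hk]
  · rw [Algebra.smul_def]
    exact dvd_mul_of_dvd_right ((pow_dvd_pow x hk).trans (ht k)) _

theorem sum_smul_pow_mul_pow_mul_choose_ne_zero [CharZero F] (φ : A →ₐ[F] F[X]) {x y : A}
    (hx : φ x = Polynomial.X) (hy : φ y = 1) {e : ℕ → F} {K d : ℕ} (hKd : K ≤ d) (he : e K ≠ 0) :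
    ∑ k ∈ range (d + 1), e k • (x ^ k * y ^ (d - k) * d.choose k) ≠ 0 := by
  have hcoeff : (φ (∑ k ∈ range (d + 1), e k • (x ^ k * y ^ (d - k) * d.choose k))).coeff K
      = e K * d.choose K := by
    simp [hx, hy, Polynomial.finsetSum_coeff, Nat.lt_succ_of_le hKd]
  have hchoose : (d.choose K : F) ≠ 0 := Nat.cast_ne_zero.mpr (Nat.choose_pos hKd).ne'
  intro h
  rw [h, map_zero, Polynomial.coeff_zero] at hcoeff
  exact mul_ne_zero he hchoose hcoeff.symm

theorem exists_algHom_X_zero_eq_X_and_linear_eq_one {lam mu : F} (hlm : ¬(lam = 0 ∧ mu = 0)) :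
    ∃ φ : MvPolynomial (Fin 3) F →ₐ[F] F[X],
      φ (X 0) = Polynomial.X ∧ φ (C lam * X 1 + C mu * X 2) = 1 := by
  obtain ⟨v₁, v₂, hv⟩ : ∃ v₁ v₂ : F, lam * v₁ + mu * v₂ = 1 := by
    by_cases hl : lam = 0
    · have hm : mu ≠ 0 := fun h => hlm ⟨hl, h⟩
      exact ⟨0, mu⁻¹, by simp [hm]⟩
    · exact ⟨lam⁻¹, 0, by simp [hl]⟩
  refine ⟨MvPolynomial.aeval ![Polynomial.X, Polynomial.C v₁, Polynomial.C v₂], by simp, ?_⟩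
  simp only [map_add, map_mul, aeval_C, aeval_X, Polynomial.algebraMap_eq, Matrix.cons_val_one,
    Matrix.cons_val_two, Matrix.head_cons, Matrix.tail_cons, Matrix.cons_val_zero]
  rw [← Polynomial.C_mul, ← Polynomial.C_mul, ← Polynomial.C_add, hv, Polynomial.C_1]

end BinaryForms

/-- Lagrange interpolation lemma (Lemma 3.4 of the paper): for distinct nodes b₁,…,b_K,
x = x₁, y = λx₂ + μx₃ with (λ,μ) ≠ (0,0), lᵢ = bᵢx + y and c different from all bᵢ,
the polynomial f(c) = Σᵢ pᵢᵇ(c)·lᵢ^d − (cx+y)^d is nonzero and divisible by x^K. -/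
theorem stmt4 (K d : ℕ) (hd : K < d) (b : Fin K → ℂ) (hb : Function.Injective b)
    (lam mu : ℂ) (hlm : ¬(lam = 0 ∧ mu = 0)) (c : ℂ) (hc : ∀ i, c ≠ b i)
    (x y f : MvPolynomial (Fin 3) ℂ)
    (hx : x = X 0) (hy : y = C lam * X 1 + C mu * X 2)
    (hf : f = (∑ i, C (∏ j ∈ Finset.univ.erase i, (c - b j) / (b i - b j)) *
        (C (b i) * x + y) ^ d) - (C c * x + y) ^ d) :
    f ≠ 0 ∧ x ^ K ∣ f := by
  simp only [C_mul', ← Lagrange.eval_basis_univ, sum_smul_add_pow_sub_add_pow] at hf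
  subst hf
  constructor
  · obtain ⟨φ, hφx, hφy⟩ := exists_algHom_X_zero_eq_X_and_linear_eq_one hlm
    refine sum_smul_pow_mul_pow_mul_choose_ne_zero φ (hx ▸ hφx) (hy ▸ hφy) hd.le ?_
    have hpowK := Lagrange.sum_eval_basis_mul_pow_card hb c
    rw [Fintype.card_fin] at hpowK
    rw [hpowK, sub_sub_cancel_left, neg_ne_zero]
    exact Finset.prod_ne_zero_iff.mpr fun i _ => sub_ne_zero.mpr (hc i)
  · refine pow_dvd_sum_smul (fun k => (dvd_mul_right _ _).mul_right _) (fun k hk => ?_) _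
    rw [Lagrange.sum_eval_basis_mul_pow_of_lt hb c (by simpa using hk), sub_self]
end

section
/- Let b₁,…,b_K be distinct complex numbers, x, y linearly independent linear forms, lᵢ = bᵢx + y, and d > K. Then for c ∉ {b₁,…,b_K}, the polynomial Σᵢ p_i^b(c)·lᵢ^d − (cx+y)^d is divisible by x^K (divisibility part of the interpolation lemma). -/
/-!
Expanding binomially, the coefficient of `x ^ k * y ^ (d - k)` in
`Σᵢ pᵢ(c) • (bᵢ x + y) ^ d - (c x + y) ^ d` is a multiple of `Σᵢ pᵢ(c) bᵢ ^ k - c ^ k`.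
Lagrange interpolation at the `K` nodes reproduces the polynomial `X ^ k` exactly when `k < K`,
so these coefficients vanish for `k < K`, and every surviving term carries a factor `x ^ K`.
-/

open MvPolynomial

section Interpolation

variable {F ι : Type*} [Field F] [Fintype ι] [DecidableEq ι]

theorem eval_lagrange_basis (b : ι → F) (c : F) (i : ι) :
    (Lagrange.basis Finset.univ b i).eval c =
      ∏ j ∈ Finset.univ.erase i, (c - b j) / (b i - b j) := by
  simp only [Lagrange.basis, Lagrange.basisDivisor, Polynomial.eval_prod, Polynomial.eval_mul,
    Polynomial.eval_C, Polynomial.eval_sub, Polynomial.eval_X, inv_mul_eq_div]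

theorem sum_lagrange_weight_mul_eval {b : ι → F} (hb : Function.Injective b) (c : F)
    {f : Polynomial F} (hf : f.degree < Fintype.card ι) :
    ∑ i, (∏ j ∈ Finset.univ.erase i, (c - b j) / (b i - b j)) * f.eval (b i) = f.eval c := by
  conv_rhs => rw [Lagrange.eq_interpolate hb.injOn hf]
  simp only [Lagrange.interpolate_apply, Polynomial.eval_finsetSum, Polynomial.eval_mul,
    Polynomial.eval_C, eval_lagrange_basis, mul_comm]

end Interpolation

section BinomialDifference

variable {R ι : Type*} [CommRing R] [Fintype ι]

theorem sum_mul_add_pow_sub_add_pow (w a : ι → R) (c x y : R) (d : ℕ) :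
    ∑ i, w i * (a i * x + y) ^ d - (c * x + y) ^ d =
      ∑ k ∈ Finset.range (d + 1),
        (∑ i, w i * a i ^ k - c ^ k) * x ^ k * y ^ (d - k) * d.choose k := by
  simp only [add_pow, Finset.mul_sum, Finset.sum_mul, sub_mul, Finset.sum_sub_distrib]
  rw [Finset.sum_comm]
  congr 1 <;> refine Finset.sum_congr rfl fun _ _ => ?_
  · exact Finset.sum_congr rfl fun _ _ => by ring
  · ring

theorem pow_dvd_sum_mul_add_pow_sub_add_pow {K : ℕ} {w a : ι → R} {c : R}
    (h : ∀ k < K, ∑ i, w i * a i ^ k = c ^ k) (x y : R) (d : ℕ) :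
    x ^ K ∣ ∑ i, w i * (a i * x + y) ^ d - (c * x + y) ^ d := by
  rw [sum_mul_add_pow_sub_add_pow]
  refine Finset.dvd_sum fun k _ => ?_
  rcases lt_or_ge k K with hk | hk
  · simp [h k hk]
  · exact Dvd.dvd.mul_right (Dvd.dvd.mul_right ((pow_dvd_pow x hk).mul_left _) _) _

end BinomialDifference

theorem stmt5_general (K d : ℕ) (b : Fin K → ℂ) (hb : Function.Injective b)
    (x y : MvPolynomial (Fin 3) ℂ) (c : ℂ) :
    x ^ K ∣ (∑ i, C (∏ j ∈ Finset.univ.erase i, (c - b j) / (b i - b j)) *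
        (C (b i) * x + y) ^ d) - (C c * x + y) ^ d := by
  refine pow_dvd_sum_mul_add_pow_sub_add_pow (fun k hk => ?_) x y d
  have hdeg : (Polynomial.X ^ k : Polynomial ℂ).degree < Fintype.card (Fin K) := by
    simpa using hk
  have := sum_lagrange_weight_mul_eval hb c hdeg
  simp only [Polynomial.eval_pow, Polynomial.eval_X] at this
  simp only [← map_pow, ← map_mul, ← map_sum, this]

/-- Divisibility part of the interpolation lemma: for distinct nodes b₁,…,b_K,
linearly independent linear forms x, y, lᵢ = bᵢx + y, d > K and c ∉ {b₁,…,b_K},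
the polynomial Σᵢ pᵢᵇ(c)·lᵢ^d − (cx+y)^d is divisible by x^K. -/
theorem stmt5 (K d : ℕ) (hd : K < d) (b : Fin K → ℂ) (hb : Function.Injective b)
    (x y : MvPolynomial (Fin 3) ℂ) (hx : x.IsHomogeneous 1) (hy : y.IsHomogeneous 1)
    (hxy : LinearIndependent ℂ ![x, y])
    (c : ℂ) (hc : ∀ i, c ≠ b i) :
    x ^ K ∣ (∑ i, C (∏ j ∈ Finset.univ.erase i, (c - b j) / (b i - b j)) *
        (C (b i) * x + y) ^ d) - (C c * x + y) ^ d :=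
  stmt5_general K d b hb x y c
end
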